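/- Fix n and let X_1,...,X_n be independent with E[X_i] = 0, Σ_{i=1}^n E[X_i^2] = 1, and |X_i| ≤ r_n almost surely; let g_1,...,g_n be reals with g_n* = max_k|g_k|, S_k = X_1+...+X_k, Z_k := S_k − g_k, T := inf{k ≥ 1 : S_k ≤ g_k}, Ẑ_k := Z_k·1{T>k}, B_m^2 := Σ_{i=1}^m E[X_i^2], E_n := E[Ẑ_n]. For h > 0 let ν(h) := inf{k ≥ 1 : Z_k ≥ h}. Suppose m ≤ n satisfies P(T > m) ≤ 3E[Ẑ_m]/B_m, B_m ≥ 24 g_n*, and h ≥ 6 g_n*; set κ := 2/h + 4/B_m. Then: (i) 2 E[Ẑ_{ν(h)∧m}] ≤ 3 E[Ẑ_m] ≤ 4 E_n; (ii) P(Ẑ_{ν(h)∧m} > 0) ≤ κ E_n; (iii) 2κ g_n* E_n ≥ E[Ẑ_{ν(h)∧m}] − E_n ≥ δ(h) − 2κ g_n* E_n, where δ(h) := E[X_T; ν(h)∧m < T ≤ n] satisfies 0 ≥ δ(h) ≥ −κ r_n E_n. -/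

import Mathlib

open MeasureTheory ProbabilityTheory Filter

noncomputable section

/-- Partial sums `S_k = X_1 + … + X_k`. -/
def psum {Ω : Type*} (X : ℕ → Ω → ℝ) (k : ℕ) (ω : Ω) : ℝ :=
  ∑ i ∈ Finset.Icc 1 k, X i ω

/-- First crossing time `T = inf {k : 1 ≤ k ≤ n, S_k ≤ g_k}`, with the value `n + 1`
if no crossing occurs up to time `n`. -/
def fpt {Ω : Type*} (n : ℕ) (S : ℕ → Ω → ℝ) (g : ℕ → ℝ) (ω : Ω) : ℕ :=
  sInf ({k | 1 ≤ k ∧ k ≤ n ∧ S k ω ≤ g k} ∪ {n + 1})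

/-- `Ẑ_k = (S_k - g_k) 1{T > k}`. -/
def zhat {Ω : Type*} (n : ℕ) (X : ℕ → Ω → ℝ) (g : ℕ → ℝ) (k : ℕ) (ω : Ω) : ℝ :=
  if k < fpt n (psum X) g ω then psum X k ω - g k else 0

/-- `ν(h) = inf {k ≥ 1 : Z_k ≥ h}`, with the value `n + 1` if no such `k ≤ n` exists. -/
def nuTime {Ω : Type*} (n : ℕ) (X : ℕ → Ω → ℝ) (g : ℕ → ℝ) (h : ℝ) (ω : Ω) : ℕ :=
  sInf ({k | 1 ≤ k ∧ k ≤ n ∧ h ≤ psum X k ω - g k} ∪ {n + 1})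


/-!
The partial sums `S` form a martingale up to time `n`, so `E[S_ρ] = 0` for every stopping time
`ρ ≤ n`. Removing the martingale increment `S_{T∧M} - S_{σ∧T}` from `Ẑ_σ - Ẑ_M` (for a stopping
time `1 ≤ σ ≤ M ≤ n`) leaves only boundary terms: `g_M - g_σ` when `T > M`, and `S_T - g_σ` when
`σ < T ≤ M`. Since `|g| ≤ g*`, `S_T ≤ g_T` and `S_{T-1} > g_{T-1}`, this gives
`E[X_T; σ < T ≤ M] - 2 g* P(σ < T) ≤ E[Ẑ_σ] - E[Ẑ_M] ≤ 2 g* P(σ < T, σ < M)`.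
Taking `(σ, M) = (m, n), (ν∧m, m), (ν∧m, n)` and using Markov's inequality
`h P(ν < m, ν < T) ≤ E[Ẑ_{ν∧m}]` and the assumed bound on `P(T > m)` yields (i)–(iii).
Finally `δ(h) ≤ 0`: on `{T = t}` the increment `X_t` is at most `g_t - S_{t-1}`, so replacing
`{T = t}` by the predictable event `{T > t - 1, S_{t-1} ≤ g_t}` can only increase `E[X_t; ·]`,
which then vanishes.
-/

/-- `fpt n S g ω` and `nuTime n X g h ω` are, by definition, `firstTime n P` for the evident `P`. -/
def firstTime (n : ℕ) (P : ℕ → Prop) : ℕ :=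
  sInf ({k | 1 ≤ k ∧ k ≤ n ∧ P k} ∪ {n + 1})

section FirstTime

variable {n k : ℕ} {P : ℕ → Prop}

lemma firstTime_mem : firstTime n P ∈ {k | 1 ≤ k ∧ k ≤ n ∧ P k} ∪ {n + 1} :=
  Nat.sInf_mem ⟨n + 1, Or.inr rfl⟩

lemma firstTime_le_succ : firstTime n P ≤ n + 1 :=
  Nat.sInf_le (Or.inr rfl)

lemma one_le_firstTime : 1 ≤ firstTime n P := by
  rcases firstTime_mem (n := n) (P := P) with h | h
  · exact h.1
  · rw [Set.mem_singleton_iff.mp h]; omega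

lemma firstTime_spec (h : firstTime n P ≤ n) : P (firstTime n P) := by
  rcases firstTime_mem (n := n) (P := P) with h' | h'
  · exact h'.2.2
  · rw [Set.mem_singleton_iff.mp h'] at h; omega

lemma firstTime_le (hk : 1 ≤ k) (hkn : k ≤ n) (hP : P k) : firstTime n P ≤ k :=
  Nat.sInf_le (Or.inl ⟨hk, hkn, hP⟩)

lemma lt_firstTime_iff (hkn : k ≤ n) : k < firstTime n P ↔ ∀ l, 1 ≤ l → l ≤ k → ¬ P l := by
  refine ⟨fun hk l hl hlk hP => ?_, fun h => ?_⟩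
  · have := firstTime_le hl (hlk.trans hkn) hP; omega
  · by_contra! hle
    exact h _ one_le_firstTime hle (firstTime_spec (hle.trans hkn))

end FirstTime

section StoppingTime

variable {Ω : Type*} {m0 : MeasurableSpace Ω} {ℱ : Filtration ℕ m0}

lemma isStoppingTime_nat_iff {σ : Ω → ℕ} :
    IsStoppingTime ℱ (fun ω => (σ ω : WithTop ℕ)) ↔ ∀ i, MeasurableSet[ℱ i] {ω | σ ω ≤ i} := by
  simp only [IsStoppingTime, ENat.some_eq_natCast, Nat.cast_le]

lemma MeasureTheory.IsStoppingTime.measurable_nat {σ : Ω → ℕ}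
    (hσ : IsStoppingTime ℱ (fun ω => (σ ω : WithTop ℕ))) : Measurable σ :=
  measurable_to_countable' fun i => ℱ.le i _ <| by
    have := hσ.measurableSet_eq i
    simp only [ENat.some_eq_natCast, Nat.cast_inj] at this
    exact this

lemma MeasureTheory.IsStoppingTime.min_nat {σ ρ : Ω → ℕ}
    (hσ : IsStoppingTime ℱ (fun ω => (σ ω : WithTop ℕ)))
    (hρ : IsStoppingTime ℱ (fun ω => (ρ ω : WithTop ℕ))) :
    IsStoppingTime ℱ (fun ω => ((min (σ ω) (ρ ω) : ℕ) : WithTop ℕ)) := by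
  refine isStoppingTime_nat_iff.mpr fun i => ?_
  simp only [min_le_iff, Set.ofPred_or]
  exact (isStoppingTime_nat_iff.mp hσ i).union (isStoppingTime_nat_iff.mp hρ i)

lemma isStoppingTime_firstTime (n : ℕ) {P : ℕ → Ω → Prop}
    (hP : ∀ k, MeasurableSet[ℱ k] {ω | P k ω}) :
    IsStoppingTime ℱ (fun ω => (firstTime n (P · ω) : WithTop ℕ)) := by
  refine isStoppingTime_nat_iff.mpr fun i => ?_
  rcases le_or_gt i n with hin | hin
  · have : {ω | firstTime n (P · ω) ≤ i} = ⋃ l ∈ Finset.Icc 1 i, {ω | P l ω} := by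
      ext ω
      simp only [Set.mem_ofPred_eq, Set.mem_iUnion, Finset.mem_Icc, exists_prop, ← not_lt,
        lt_firstTime_iff hin, and_assoc]
      push Not
      rfl
    rw [this]
    exact .biUnion (Finset.Icc 1 i).countable_toSet
      fun l hl => ℱ.mono (Finset.mem_Icc.mp hl).2 _ (hP l)
  · simp only [show ∀ ω, firstTime n (P · ω) ≤ i from fun ω => firstTime_le_succ.trans hin,
      Set.ofPred_true, MeasurableSet.univ]

lemma isStoppingTime_fpt {n : ℕ} {S : ℕ → Ω → ℝ} {g : ℕ → ℝ} (hS : Adapted ℱ S) :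
    IsStoppingTime ℱ (fun ω => (fpt n S g ω : WithTop ℕ)) :=
  isStoppingTime_firstTime n fun k => measurableSet_le (hS k) measurable_const

lemma isStoppingTime_nuTime {n : ℕ} {X : ℕ → Ω → ℝ} {g : ℕ → ℝ} (hS : Adapted ℱ (psum X))
    (h : ℝ) : IsStoppingTime ℱ (fun ω => (nuTime n X g h ω : WithTop ℕ)) :=
  isStoppingTime_firstTime n fun k =>
    measurableSet_le measurable_const ((hS k).sub measurable_const)

end StoppingTime

section Pointwise

variable {Ω : Type*} {n : ℕ} {X : ℕ → Ω → ℝ} {g : ℕ → ℝ}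

local notation "T" => fpt n (psum X) g

lemma psum_eq_sum_ite {j M : ℕ} (hj : j ≤ M) (ω : Ω) :
    psum X j ω = ∑ k ∈ Finset.Icc 1 M, if k ≤ j then X k ω else 0 := by
  rw [psum, ← Finset.sum_filter]
  congr 1
  ext k
  simp only [Finset.mem_Icc, Finset.mem_filter]
  omega

lemma psum_eq_psum_sub_one_add {t : ℕ} (ht : 1 ≤ t) (ω : Ω) :
    psum X t ω = psum X (t - 1) ω + X t ω := by
  obtain ⟨j, rfl⟩ : ∃ j, t = j + 1 := ⟨t - 1, by omega⟩
  exact Finset.sum_Icc_succ_top (by omega) _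

lemma one_le_fpt (ω : Ω) : 1 ≤ T ω := one_le_firstTime

lemma fpt_le_succ (ω : Ω) : T ω ≤ n + 1 := firstTime_le_succ

lemma lt_psum_of_lt_fpt {k : ℕ} {ω : Ω} (hk : 1 ≤ k) (hkT : k < T ω) : g k < psum X k ω := by
  have hkn : k ≤ n := by have := fpt_le_succ (n := n) (X := X) (g := g) ω; omega
  simpa using (lt_firstTime_iff hkn).mp hkT k hk le_rfl

lemma psum_fpt_le {ω : Ω} (hTn : T ω ≤ n) : psum X (T ω) ω ≤ g (T ω) :=
  firstTime_spec hTn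

lemma zhat_eq_indicator (k : ℕ) :
    zhat n X g k = {ω | k < T ω}.indicator (fun ω => psum X k ω - g k) := by
  ext ω
  simp only [zhat, Set.indicator_apply, Set.mem_ofPred_eq]

lemma zhat_nonneg {k : ℕ} (hk : 1 ≤ k) (ω : Ω) : 0 ≤ zhat n X g k ω := by
  unfold zhat
  split_ifs with hkT
  · linarith [lt_psum_of_lt_fpt hk hkT]
  · exact le_rfl

lemma zhat_pos_iff {k : ℕ} (hk : 1 ≤ k) (ω : Ω) : 0 < zhat n X g k ω ↔ k < T ω := by
  unfold zhat
  split_ifs with hkT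
  · simp only [hkT, sub_pos, lt_psum_of_lt_fpt hk hkT]
  · simp [hkT]

def zhatDrift (n : ℕ) (X : ℕ → Ω → ℝ) (g : ℕ → ℝ) (s M : ℕ) (ω : Ω) : ℝ :=
  if s < fpt n (psum X) g ω then
    if M < fpt n (psum X) g ω then g M - g s else psum X (fpt n (psum X) g ω) ω - g s
  else 0

lemma zhat_sub_zhat_add_psum_sub {s M : ℕ} (hsM : s ≤ M) (ω : Ω) :
    zhat n X g s ω - zhat n X g M ω + (psum X (min (T ω) M) ω - psum X (min s (T ω)) ω) =
      zhatDrift n X g s M ω := by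
  unfold zhat zhatDrift
  split_ifs with hs hM hM
  · rw [min_eq_right hM.le, min_eq_left hs.le]; ring
  · rw [min_eq_left (not_lt.mp hM), min_eq_left hs.le]; ring
  · omega
  · rw [min_eq_left (by omega), min_eq_right (not_lt.mp hs)]; ring

variable {gs : ℝ}

lemma zhatDrift_le (hg : ∀ k ∈ Finset.Icc 1 n, |g k| ≤ gs) {s M : ℕ} (hs : 1 ≤ s) (hsM : s ≤ M)
    (hMn : M ≤ n) (ω : Ω) :
    zhatDrift n X g s M ω ≤ if s < T ω ∧ s < M then 2 * gs else 0 := by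
  have hgs : ∀ k, 1 ≤ k → k ≤ n → -gs ≤ g k ∧ g k ≤ gs :=
    fun k h1 h2 => abs_le.mp (hg k (Finset.mem_Icc.mpr ⟨h1, h2⟩))
  have := hgs s hs (hsM.trans hMn)
  rcases le_or_gt (T ω) s with hTs | hsT
  · simp [zhatDrift, not_lt.mpr hTs]
  rcases lt_or_ge M (T ω) with hMT | hTM
  · rcases hsM.lt_or_eq with hsM | rfl
    · have := hgs M (hs.trans hsM.le) hMn
      simp only [zhatDrift, hsT, hMT, hsM, and_self, if_true]
      linarith
    · simp [zhatDrift, hMT]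
  · have := hgs _ (one_le_fpt ω) (hTM.trans hMn)
    have := psum_fpt_le (X := X) (g := g) (hTM.trans hMn)
    simp only [zhatDrift, hsT, not_lt.mpr hTM, hsT.trans_le hTM, and_self, if_true, if_false]
    linarith

lemma zhatDrift_ge (hg : ∀ k ∈ Finset.Icc 1 n, |g k| ≤ gs) {s M : ℕ} (hs : 1 ≤ s) (hsM : s ≤ M)
    (hMn : M ≤ n) (ω : Ω) :
    (if s < T ω ∧ T ω ≤ M then X (T ω) ω else 0) - (if s < T ω then 2 * gs else 0) ≤
      zhatDrift n X g s M ω := by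
  have hgs : ∀ k, 1 ≤ k → k ≤ n → -gs ≤ g k ∧ g k ≤ gs :=
    fun k h1 h2 => abs_le.mp (hg k (Finset.mem_Icc.mpr ⟨h1, h2⟩))
  have := hgs s hs (hsM.trans hMn)
  rcases le_or_gt (T ω) s with hTs | hsT
  · simp [zhatDrift, not_lt.mpr hTs]
  rcases lt_or_ge M (T ω) with hMT | hTM
  · have := hgs M (hs.trans hsM) hMn
    simp only [zhatDrift, hsT, hMT, not_le.mpr hMT, and_false, if_true, if_false]
    linarith
  · have := lt_psum_of_lt_fpt (n := n) (X := X) (g := g) (ω := ω) (k := T ω - 1) (by omega)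
      (by omega)
    have := hgs (T ω - 1) (by omega) (by omega)
    simp only [zhatDrift, hsT, not_lt.mpr hTM, hTM, and_self, if_true, if_false]
    rw [psum_eq_psum_sub_one_add (one_le_fpt ω)]
    linarith

lemma indicator_X_fpt_eq_sum (σ : Ω → ℕ) (M : ℕ) :
    {ω | σ ω < T ω ∧ T ω ≤ M}.indicator (fun ω => X (T ω) ω) =
      fun ω => ∑ t ∈ Finset.Icc 1 M, {ω | σ ω < t ∧ T ω = t}.indicator (X t) ω := by
  ext ω
  by_cases h : ω ∈ {ω | σ ω < T ω ∧ T ω ≤ M}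
  · rw [Set.indicator_of_mem h, Finset.sum_eq_single_of_mem (T ω)
      (Finset.mem_Icc.mpr ⟨one_le_fpt ω, h.2⟩) fun t _ ht => ?_]
    · simp [h.1]
    · simp [Ne.symm ht]
  · rw [Set.indicator_of_notMem h]
    refine (Finset.sum_eq_zero fun t ht => Set.indicator_of_notMem ?_ _).symm
    rintro ⟨hσt, rfl⟩
    exact h ⟨hσt, (Finset.mem_Icc.mp ht).2⟩

lemma indicator_fpt_eq_le {t : ℕ} (ht : 1 ≤ t) (htn : t ≤ n) (σ : Ω → ℕ) (ω : Ω) :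
    {ω | σ ω < t ∧ T ω = t}.indicator (X t) ω ≤
      {ω | σ ω ≤ t - 1 ∧ t - 1 < T ω ∧ psum X (t - 1) ω ≤ g t}.indicator (X t) ω := by
  have hsplit := psum_eq_psum_sub_one_add (X := X) ht ω
  simp only [Set.indicator_apply, Set.mem_ofPred_eq]
  split_ifs with hA hB hB
  · exact le_rfl
  · have hcross := psum_fpt_le (X := X) (g := g) (ω := ω) (hA.2.le.trans htn)
    rw [hA.2] at hcross
    have : g t < psum X (t - 1) ω := by
      by_contra! hle
      exact hB ⟨by omega, by omega, hle⟩
    linarith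
  · have hlt : t < T ω := by
      have : T ω ≠ t := fun h => hA ⟨by omega, h⟩
      omega
    linarith [lt_psum_of_lt_fpt (X := X) (g := g) ht hlt, hB.2.2]
  · exact le_rfl

end Pointwise

section Integrability

variable {Ω : Type*} {m0 : MeasurableSpace Ω} {μ : Measure Ω} {n : ℕ} {X : ℕ → Ω → ℝ}
  {g : ℕ → ℝ}

local notation "T" => fpt n (psum X) g

lemma integrable_comp_of_mem_finset {ι E : Type*} [MeasurableSpace ι]
    [MeasurableSingletonClass ι] [NormedAddCommGroup E] {F : ι → Ω → E} {σ : Ω → ι}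
    {s : Finset ι} (hσ : Measurable σ) (hσs : ∀ ω, σ ω ∈ s) (hF : ∀ i ∈ s, Integrable (F i) μ) :
    Integrable (fun ω => F (σ ω) ω) μ := by
  have : (fun ω => F (σ ω) ω) = ∑ i ∈ s, (σ ⁻¹' {i}).indicator (F i) := by
    ext ω
    rw [Finset.sum_apply, Finset.sum_eq_single_of_mem (σ ω) (hσs ω) fun i _ hi => ?_]
    · simp
    · simp [Ne.symm hi]
  rw [this]
  exact integrable_finsetSum' _ fun i hi => (hF i hi).indicator (hσ (measurableSet_singleton i))

lemma integrable_psum (hint : ∀ i ∈ Finset.Icc 1 n, Integrable (X i) μ) {k : ℕ} (hk : k ≤ n) :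
    Integrable (psum X k) μ :=
  integrable_finsetSum _ fun i hi =>
    hint i (Finset.mem_Icc.mpr ⟨(Finset.mem_Icc.mp hi).1, (Finset.mem_Icc.mp hi).2.trans hk⟩)

lemma integrable_psum_comp (hint : ∀ i ∈ Finset.Icc 1 n, Integrable (X i) μ) {ρ : Ω → ℕ}
    (hρ : Measurable ρ) (hρn : ∀ ω, ρ ω ≤ n) : Integrable (fun ω => psum X (ρ ω) ω) μ :=
  integrable_comp_of_mem_finset hρ (fun ω => Finset.mem_range_succ_iff.mpr (hρn ω))
    fun _ hk => integrable_psum hint (Finset.mem_range_succ_iff.mp hk)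

lemma integrable_indicator_X_fpt (hint : ∀ i ∈ Finset.Icc 1 n, Integrable (X i) μ)
    (hT : Measurable T) {σ : Ω → ℕ} (hσ : Measurable σ) {M : ℕ} (hMn : M ≤ n) :
    Integrable ({ω | σ ω < T ω ∧ T ω ≤ M}.indicator fun ω => X (T ω) ω) μ := by
  rw [indicator_X_fpt_eq_sum]
  exact integrable_finsetSum _ fun t ht =>
    (hint t (Finset.mem_Icc.mpr ⟨(Finset.mem_Icc.mp ht).1, (Finset.mem_Icc.mp ht).2.trans hMn⟩)
      ).indicator ((measurableSet_lt hσ measurable_const).inter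
        (measurableSet_eq_fun hT measurable_const))

variable [IsFiniteMeasure μ]

lemma integrable_zhat_comp (hint : ∀ i ∈ Finset.Icc 1 n, Integrable (X i) μ)
    (hT : Measurable T) {σ : Ω → ℕ} (hσ : Measurable σ) (hσn : ∀ ω, σ ω ≤ n) :
    Integrable (fun ω => zhat n X g (σ ω) ω) μ :=
  integrable_comp_of_mem_finset hσ (fun ω => Finset.mem_range_succ_iff.mpr (hσn ω))
    fun k hk => by
      rw [zhat_eq_indicator]
      exact ((integrable_psum hint (Finset.mem_range_succ_iff.mp hk)).sub
        (integrable_const _)).indicator (measurableSet_lt measurable_const hT)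

lemma integrable_zhatDrift (hint : ∀ i ∈ Finset.Icc 1 n, Integrable (X i) μ)
    (hT : Measurable T) {σ : Ω → ℕ} (hσ : Measurable σ) {M : ℕ} (hσM : ∀ ω, σ ω ≤ M)
    (hMn : M ≤ n) : Integrable (fun ω => zhatDrift n X g (σ ω) M ω) μ := by
  simp_rw [← zhat_sub_zhat_add_psum_sub (hσM _)]
  exact ((integrable_zhat_comp hint hT hσ fun ω => (hσM ω).trans hMn).sub
    (integrable_zhat_comp hint hT measurable_const fun _ => hMn)).add
    ((integrable_psum_comp hint (hT.min measurable_const) fun _ => (min_le_right _ _).trans hMn).sub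
      (integrable_psum_comp hint (hσ.min hT) fun ω => (min_le_left _ _).trans ((hσM ω).trans hMn)))

end Integrability

section OptionalStopping

variable {Ω : Type*} {m0 : MeasurableSpace Ω} {μ : Measure Ω} {ℱ : Filtration ℕ m0}
  {n : ℕ} {X : ℕ → Ω → ℝ} {g : ℕ → ℝ} {σ : Ω → ℕ} {M : ℕ}

local notation "T" => fpt n (psum X) g

lemma integral_psum_stopped_eq_zero (hint : ∀ i ∈ Finset.Icc 1 n, Integrable (X i) μ)
    (hmart : ∀ k ∈ Finset.Icc 1 n, ∀ A, MeasurableSet[ℱ (k - 1)] A → ∫ ω in A, X k ω ∂μ = 0)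
    {ρ : Ω → ℕ} (hρ : IsStoppingTime ℱ (fun ω => (ρ ω : WithTop ℕ))) (hρn : ∀ ω, ρ ω ≤ n) :
    ∫ ω, psum X (ρ ω) ω ∂μ = 0 := by
  have hA : ∀ k ∈ Finset.Icc 1 n, MeasurableSet[ℱ (k - 1)] {ω | k ≤ ρ ω} := fun k hk => by
    have : {ω | k ≤ ρ ω} = {ω | ρ ω ≤ k - 1}ᶜ := by
      ext ω
      simp only [Set.mem_ofPred_eq, Set.mem_compl_iff]
      have := (Finset.mem_Icc.mp hk).1
      omega
    rw [this]
    exact (isStoppingTime_nat_iff.mp hρ _).compl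
  have hsum : (fun ω => psum X (ρ ω) ω) = fun ω =>
      ∑ k ∈ Finset.Icc 1 n, {ω | k ≤ ρ ω}.indicator (X k) ω := by
    ext ω
    rw [psum_eq_sum_ite (hρn ω)]
    simp only [Set.indicator_apply, Set.mem_ofPred_eq]
  rw [hsum, integral_finsetSum _ fun k hk => (hint k hk).indicator (ℱ.le _ _ (hA k hk))]
  refine Finset.sum_eq_zero fun k hk => ?_
  rw [integral_indicator (ℱ.le _ _ (hA k hk))]
  exact hmart k hk _ (hA k hk)

lemma measurableSet_lt_fpt (hS : Adapted ℱ (psum X)) (t : ℕ) :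
    MeasurableSet[ℱ t] {ω | t < T ω} := by
  simpa only [Set.compl_ofPred, not_le] using
    (isStoppingTime_nat_iff.mp (isStoppingTime_fpt (g := g) (n := n) hS) t).compl

lemma setIntegral_X_fpt_nonpos (hint : ∀ i ∈ Finset.Icc 1 n, Integrable (X i) μ)
    (hmart : ∀ k ∈ Finset.Icc 1 n, ∀ A, MeasurableSet[ℱ (k - 1)] A → ∫ ω in A, X k ω ∂μ = 0)
    (hS : Adapted ℱ (psum X)) (hσ : IsStoppingTime ℱ (fun ω => (σ ω : WithTop ℕ)))
    (hMn : M ≤ n) :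
    ∫ ω in {ω | σ ω < T ω ∧ T ω ≤ M}, X (T ω) ω ∂μ ≤ 0 := by
  have hT := (isStoppingTime_fpt (g := g) (n := n) hS).measurable_nat
  have hσm := hσ.measurable_nat
  have hmem : ∀ t ∈ Finset.Icc 1 M, t ∈ Finset.Icc 1 n :=
    fun t ht => Finset.mem_Icc.mpr ⟨(Finset.mem_Icc.mp ht).1, (Finset.mem_Icc.mp ht).2.trans hMn⟩
  have hAt : ∀ t, MeasurableSet {ω | σ ω < t ∧ T ω = t} := fun t =>
    (measurableSet_lt hσm measurable_const).inter (measurableSet_eq_fun hT measurable_const)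
  have hA : MeasurableSet {ω | σ ω < T ω ∧ T ω ≤ M} :=
    (measurableSet_lt hσm hT).inter (measurableSet_le hT measurable_const)
  rw [← integral_indicator hA, indicator_X_fpt_eq_sum,
    integral_finsetSum _ fun t ht => (hint t (hmem t ht)).indicator (hAt t)]
  refine Finset.sum_nonpos fun t ht => ?_
  obtain ⟨ht1, htn⟩ := Finset.mem_Icc.mp (hmem t ht)
  have hB : MeasurableSet[ℱ (t - 1)]
      {ω | σ ω ≤ t - 1 ∧ t - 1 < T ω ∧ psum X (t - 1) ω ≤ g t} :=
    (isStoppingTime_nat_iff.mp hσ _).inter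
      ((measurableSet_lt_fpt hS _).inter (measurableSet_le (hS _) measurable_const))
  calc ∫ ω, {ω | σ ω < t ∧ T ω = t}.indicator (X t) ω ∂μ
      ≤ ∫ ω, {ω | σ ω ≤ t - 1 ∧ t - 1 < T ω ∧ psum X (t - 1) ω ≤ g t}.indicator (X t) ω ∂μ :=
        integral_mono ((hint t (hmem t ht)).indicator (hAt t))
          ((hint t (hmem t ht)).indicator (ℱ.le _ _ hB)) (indicator_fpt_eq_le ht1 htn σ)
    _ = 0 := by
        rw [integral_indicator (ℱ.le _ _ hB)]
        exact hmart t (hmem t ht) _ hB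

variable [IsFiniteMeasure μ]

lemma integral_zhat_sub_zhat (hint : ∀ i ∈ Finset.Icc 1 n, Integrable (X i) μ)
    (hmart : ∀ k ∈ Finset.Icc 1 n, ∀ A, MeasurableSet[ℱ (k - 1)] A → ∫ ω in A, X k ω ∂μ = 0)
    (hS : Adapted ℱ (psum X)) (hσ : IsStoppingTime ℱ (fun ω => (σ ω : WithTop ℕ)))
    (hσM : ∀ ω, σ ω ≤ M) (hMn : M ≤ n) :
    ∫ ω, zhat n X g (σ ω) ω ∂μ - ∫ ω, zhat n X g M ω ∂μ =
      ∫ ω, zhatDrift n X g (σ ω) M ω ∂μ := by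
  have hTs := isStoppingTime_fpt (g := g) (n := n) hS
  have hT := hTs.measurable_nat
  have hσm := hσ.measurable_nat
  have hσn : ∀ ω, σ ω ≤ n := fun ω => (hσM ω).trans hMn
  have hZσ := integrable_zhat_comp (g := g) hint hT hσm hσn
  have hZM := integrable_zhat_comp (g := g) (σ := fun _ => M) hint hT measurable_const fun _ => hMn
  have hS₁ := integrable_psum_comp (ρ := fun ω => min (T ω) M) hint (hT.min measurable_const)
    fun _ => (min_le_right _ _).trans hMn
  have hS₂ := integrable_psum_comp (ρ := fun ω => min (σ ω) (T ω)) hint (hσm.min hT)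
    fun ω => (min_le_left _ _).trans (hσn ω)
  simp_rw [← zhat_sub_zhat_add_psum_sub (hσM _)]
  rw [integral_add (by exact hZσ.sub hZM) (by exact hS₁.sub hS₂), integral_sub hZσ hZM,
    integral_sub hS₁ hS₂,
    integral_psum_stopped_eq_zero (ρ := fun ω => min (T ω) M) hint hmart
      (hTs.min_nat (isStoppingTime_const ℱ M)) fun _ => (min_le_right _ _).trans hMn,
    integral_psum_stopped_eq_zero (ρ := fun ω => min (σ ω) (T ω)) hint hmart (hσ.min_nat hTs)
      fun ω => (min_le_left _ _).trans (hσn ω), sub_zero, add_zero]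

variable {gs : ℝ}

lemma integral_zhat_sub_zhat_le (hint : ∀ i ∈ Finset.Icc 1 n, Integrable (X i) μ)
    (hmart : ∀ k ∈ Finset.Icc 1 n, ∀ A, MeasurableSet[ℱ (k - 1)] A → ∫ ω in A, X k ω ∂μ = 0)
    (hS : Adapted ℱ (psum X)) (hg : ∀ k ∈ Finset.Icc 1 n, |g k| ≤ gs)
    (hσ : IsStoppingTime ℱ (fun ω => (σ ω : WithTop ℕ))) (hσ1 : ∀ ω, 1 ≤ σ ω)
    (hσM : ∀ ω, σ ω ≤ M) (hMn : M ≤ n) :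
    ∫ ω, zhat n X g (σ ω) ω ∂μ - ∫ ω, zhat n X g M ω ∂μ ≤
      2 * gs * μ.real {ω | σ ω < T ω ∧ σ ω < M} := by
  have hT := (isStoppingTime_fpt (g := g) (n := n) hS).measurable_nat
  have hσm := hσ.measurable_nat
  have hB : MeasurableSet {ω | σ ω < T ω ∧ σ ω < M} :=
    (measurableSet_lt hσm hT).inter (measurableSet_lt hσm measurable_const)
  rw [integral_zhat_sub_zhat hint hmart hS hσ hσM hMn, mul_comm, ← smul_eq_mul,
    ← integral_indicator_const _ hB]
  refine integral_mono (integrable_zhatDrift hint hT hσm hσM hMn)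
    ((integrable_const _).indicator hB) fun ω => ?_
  simpa only [Set.indicator_apply, Set.mem_ofPred_eq] using zhatDrift_le hg (hσ1 ω) (hσM ω) hMn ω

lemma setIntegral_X_fpt_sub_le (hint : ∀ i ∈ Finset.Icc 1 n, Integrable (X i) μ)
    (hmart : ∀ k ∈ Finset.Icc 1 n, ∀ A, MeasurableSet[ℱ (k - 1)] A → ∫ ω in A, X k ω ∂μ = 0)
    (hS : Adapted ℱ (psum X)) (hg : ∀ k ∈ Finset.Icc 1 n, |g k| ≤ gs)
    (hσ : IsStoppingTime ℱ (fun ω => (σ ω : WithTop ℕ))) (hσ1 : ∀ ω, 1 ≤ σ ω)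
    (hσM : ∀ ω, σ ω ≤ M) (hMn : M ≤ n) :
    ∫ ω in {ω | σ ω < T ω ∧ T ω ≤ M}, X (T ω) ω ∂μ - 2 * gs * μ.real {ω | σ ω < T ω} ≤
      ∫ ω, zhat n X g (σ ω) ω ∂μ - ∫ ω, zhat n X g M ω ∂μ := by
  have hT := (isStoppingTime_fpt (g := g) (n := n) hS).measurable_nat
  have hσm := hσ.measurable_nat
  have hB : MeasurableSet {ω | σ ω < T ω} := measurableSet_lt hσm hT
  have hA : MeasurableSet {ω | σ ω < T ω ∧ T ω ≤ M} :=
    hB.inter (measurableSet_le hT measurable_const)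
  have hXA := integrable_indicator_X_fpt hint hT hσm hMn
  rw [integral_zhat_sub_zhat hint hmart hS hσ hσM hMn, ← integral_indicator hA, mul_comm,
    ← smul_eq_mul, ← integral_indicator_const _ hB,
    ← integral_sub hXA ((integrable_const _).indicator hB)]
  refine integral_mono (hXA.sub ((integrable_const _).indicator hB))
    (integrable_zhatDrift hint hT hσm hσM hMn) fun ω => ?_
  simpa only [Pi.sub_apply, Set.indicator_apply, Set.mem_ofPred_eq]
    using zhatDrift_ge hg (hσ1 ω) (hσM ω) hMn ω

end OptionalStopping

section Independence

variable {Ω : Type*} {m0 : MeasurableSpace Ω} {μ : Measure Ω} {n : ℕ} {X : ℕ → Ω → ℝ}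

lemma measurable_psum (hX : ∀ i, Measurable (X i)) (k : ℕ) : Measurable (psum X k) :=
  Finset.measurable_sum _ fun i _ => hX i

def psumFiltration (hX : ∀ i, Measurable (X i)) : Filtration ℕ m0 :=
  Filtration.natural (psum X) fun k => (measurable_psum hX k).stronglyMeasurable

lemma adapted_psumFiltration (hX : ∀ i, Measurable (X i)) :
    Adapted (psumFiltration hX) (psum X) :=
  fun k => (Filtration.stronglyAdapted_natural (u := psum X) _ k).measurable

lemma indep_psumFiltration (hX : ∀ i, Measurable (X i))
    (hind : iIndepFun (fun i : {i // i ∈ Finset.Icc 1 n} => X i) μ) {k : ℕ}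
    (hk : k ∈ Finset.Icc 1 n) :
    Indep (MeasurableSpace.comap (X k) inferInstance) (psumFiltration hX (k - 1)) μ := by
  obtain ⟨hk1, hkn⟩ := Finset.mem_Icc.mp hk
  let m : {i // i ∈ Finset.Icc 1 n} → MeasurableSpace Ω :=
    fun i => MeasurableSpace.comap (X i) inferInstance
  have hI := indep_iSup_of_disjoint (m := m) (fun i => (hX i).comap_le) hind.iIndep
    (S := {⟨k, hk⟩}) (T := {i | (i : ℕ) < k}) (by simp)
  refine indep_of_indep_of_le_right (indep_of_indep_of_le_left hI ?_) ?_
  · exact le_iSup₂ (f := fun i (_ : i ∈ ({⟨k, hk⟩} : Set _)) => m i) ⟨k, hk⟩ rfl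
  · refine iSup₂_le fun j hj => Measurable.comap_le (Finset.measurable_sum _ fun l hl => ?_)
    obtain ⟨hl1, hlj⟩ := Finset.mem_Icc.mp hl
    exact (comap_measurable (X l)).mono
      (le_iSup₂ (f := fun i (_ : i ∈ {i : {i // i ∈ Finset.Icc 1 n} | (i : ℕ) < k}) => m i)
        ⟨l, Finset.mem_Icc.mpr ⟨hl1, by omega⟩⟩ (show l < k by omega)) le_rfl

lemma setIntegral_eq_zero_of_psumFiltration [IsFiniteMeasure μ] (hX : ∀ i, Measurable (X i))
    (hind : iIndepFun (fun i : {i // i ∈ Finset.Icc 1 n} => X i) μ)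
    (hmean : ∀ i ∈ Finset.Icc 1 n, ∫ ω, X i ω ∂μ = 0)
    (hint : ∀ i ∈ Finset.Icc 1 n, Integrable (X i) μ) {k : ℕ} (hk : k ∈ Finset.Icc 1 n)
    {A : Set Ω} (hA : MeasurableSet[psumFiltration hX (k - 1)] A) :
    ∫ ω in A, X k ω ∂μ = 0 := by
  have hle := (psumFiltration hX).le (k - 1)
  rw [← setIntegral_condExp hle (hint k hk) hA, integral_congr_ae (ae_restrict_of_ae
    (condExp_indep_eq (hX k).comap_le hle (comap_measurable (X k)).stronglyMeasurable
      (indep_psumFiltration hX hind hk)))]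
  simp [hmean k hk]

end Independence

lemma abs_le_biSup_abs {ι : Type*} (g : ι → ℝ) {s : Finset ι} {k : ι} (hk : k ∈ s) :
    |g k| ≤ ⨆ i ∈ s, |g i| := by
  classical
  rw [Finset.ciSup_eq_max'_image (fun i => |g i|) ⟨k, hk, by simp [Real.sSup_empty]⟩
    ⟨_, Finset.mem_image_of_mem _ hk⟩]
  exact Finset.le_max' _ _ (Finset.mem_image_of_mem (fun i => |g i|) hk)

section Estimates

variable {Ω : Type*} {m0 : MeasurableSpace Ω} {μ : Measure Ω} [IsFiniteMeasure μ]
  {ℱ : Filtration ℕ m0} {n m : ℕ} {X : ℕ → Ω → ℝ} {g : ℕ → ℝ} {gs h B : ℝ}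

local notation "T" => fpt n (psum X) g

lemma abs_setIntegral_comp_le {r : ℝ} (hbdd : ∀ i ∈ Finset.Icc 1 n, ∀ᵐ ω ∂μ, |X i ω| ≤ r)
    {ρ : Ω → ℕ} {A : Set Ω} (hA : ∀ ω ∈ A, ρ ω ∈ Finset.Icc 1 n) :
    |∫ ω in A, X (ρ ω) ω ∂μ| ≤ r * μ.real A := by
  rw [← Real.norm_eq_abs]
  refine norm_setIntegral_le_of_norm_le_const_ae' (measure_lt_top μ A) ?_
  filter_upwards [(Filter.eventually_all_finset _).mpr hbdd] with ω hω hωA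
  exact hω _ (hA ω hωA)

lemma one_le_min_nuTime (hm1 : 1 ≤ m) (ω : Ω) : 1 ≤ min (nuTime n X g h ω) m :=
  le_min one_le_firstTime hm1

lemma mul_measureReal_le_integral_zhat_min_nuTime
    (hint : ∀ i ∈ Finset.Icc 1 n, Integrable (X i) μ) (hS : Adapted ℱ (psum X)) (hh : 0 ≤ h)
    (hm1 : 1 ≤ m) (hmn : m ≤ n) :
    h * μ.real {ω | min (nuTime n X g h ω) m < T ω ∧ min (nuTime n X g h ω) m < m} ≤
      ∫ ω, zhat n X g (min (nuTime n X g h ω) m) ω ∂μ := by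
  have hZ := integrable_zhat_comp hint (isStoppingTime_fpt (g := g) (n := n) hS).measurable_nat
    ((isStoppingTime_nuTime (g := g) (n := n) hS h).measurable_nat.min measurable_const)
    fun ω => (min_le_right _ _).trans hmn
  refine le_trans (mul_le_mul_of_nonneg_left (measureReal_mono fun ω hω => ?_) hh)
    (mul_meas_ge_le_integral_of_nonneg
      (ae_of_all _ fun ω => zhat_nonneg (one_le_min_nuTime hm1 ω) ω) hZ h)
  obtain ⟨hτT, hτm⟩ := hω
  have hνm : nuTime n X g h ω < m := by simpa using hτm
  rw [min_eq_left hνm.le] at hτT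
  simp only [Set.mem_ofPred_eq, min_eq_left hνm.le, zhat, if_pos hτT]
  exact firstTime_spec (hνm.le.trans hmn)

lemma three_mul_integral_zhat_le (hint : ∀ i ∈ Finset.Icc 1 n, Integrable (X i) μ)
    (hmart : ∀ k ∈ Finset.Icc 1 n, ∀ A, MeasurableSet[ℱ (k - 1)] A → ∫ ω in A, X k ω ∂μ = 0)
    (hS : Adapted ℱ (psum X)) (hg : ∀ k ∈ Finset.Icc 1 n, |g k| ≤ gs) (hm1 : 1 ≤ m) (hmn : m ≤ n)
    (hPm : μ.real {ω | m < T ω} ≤ 3 * (∫ ω, zhat n X g m ω ∂μ) / B) (h24 : 24 * gs ≤ B) :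
    3 * ∫ ω, zhat n X g m ω ∂μ ≤ 4 * ∫ ω, zhat n X g n ω ∂μ := by
  have hgs : 0 ≤ gs := (abs_nonneg _).trans (hg m (Finset.mem_Icc.mpr ⟨hm1, hmn⟩))
  have hB : 0 ≤ B := by linarith
  have hdiff := integral_zhat_sub_zhat_le (σ := fun _ => m) hint hmart hS hg
    (isStoppingTime_const ℱ m) (fun _ => hm1) (fun _ => hmn) le_rfl
  have hP : μ.real {ω | m < T ω ∧ m < n} ≤ μ.real {ω | m < T ω} :=
    measureReal_mono fun ω hω => hω.1
  have hBb : B * (3 * (∫ ω, zhat n X g m ω ∂μ) / B) ≤ 3 * ∫ ω, zhat n X g m ω ∂μ := by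
    rcases hB.eq_or_lt with rfl | hBpos
    · simpa using integral_nonneg (zhat_nonneg (n := n) (X := X) (g := g) hm1)
    · rw [mul_div_cancel₀ _ hBpos.ne']
  have := mul_le_mul_of_nonneg_left hP (by positivity : (0 : ℝ) ≤ 2 * gs)
  have := mul_le_mul_of_nonneg_right h24 (measureReal_nonneg (μ := μ) (s := {ω | m < T ω}))
  have := mul_le_mul_of_nonneg_left hPm hB
  linarith

lemma two_mul_integral_zhat_min_nuTime_le (hint : ∀ i ∈ Finset.Icc 1 n, Integrable (X i) μ)
    (hmart : ∀ k ∈ Finset.Icc 1 n, ∀ A, MeasurableSet[ℱ (k - 1)] A → ∫ ω in A, X k ω ∂μ = 0)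
    (hS : Adapted ℱ (psum X)) (hg : ∀ k ∈ Finset.Icc 1 n, |g k| ≤ gs) (hm1 : 1 ≤ m) (hmn : m ≤ n)
    (hh : 0 ≤ h) (h6 : 6 * gs ≤ h) :
    2 * ∫ ω, zhat n X g (min (nuTime n X g h ω) m) ω ∂μ ≤ 3 * ∫ ω, zhat n X g m ω ∂μ := by
  have hdiff := integral_zhat_sub_zhat_le (σ := fun ω => min (nuTime n X g h ω) m) hint hmart
    hS hg ((isStoppingTime_nuTime hS h).min_nat (isStoppingTime_const ℱ m))
    (one_le_min_nuTime hm1) (fun _ => min_le_right _ _) hmn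
  have hq := mul_measureReal_le_integral_zhat_min_nuTime (g := g) hint hS hh hm1 hmn
  have := mul_le_mul_of_nonneg_right h6 (measureReal_nonneg (μ := μ)
    (s := {ω | min (nuTime n X g h ω) m < T ω ∧ min (nuTime n X g h ω) m < m}))
  linarith

lemma measureReal_min_nuTime_lt_fpt_le (hint : ∀ i ∈ Finset.Icc 1 n, Integrable (X i) μ)
    (hmart : ∀ k ∈ Finset.Icc 1 n, ∀ A, MeasurableSet[ℱ (k - 1)] A → ∫ ω in A, X k ω ∂μ = 0)
    (hS : Adapted ℱ (psum X)) (hg : ∀ k ∈ Finset.Icc 1 n, |g k| ≤ gs) (hm1 : 1 ≤ m) (hmn : m ≤ n)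
    (hh : 0 < h) (h6 : 6 * gs ≤ h)
    (hPm : μ.real {ω | m < T ω} ≤ 3 * (∫ ω, zhat n X g m ω ∂μ) / B) (h24 : 24 * gs ≤ B) :
    μ.real {ω | min (nuTime n X g h ω) m < T ω} ≤ (2 / h + 4 / B) * ∫ ω, zhat n X g n ω ∂μ := by
  have hB : 0 ≤ B := by
    linarith [(abs_nonneg _).trans (hg m (Finset.mem_Icc.mpr ⟨hm1, hmn⟩))]
  have ha := two_mul_integral_zhat_min_nuTime_le hint hmart hS hg hm1 hmn hh.le h6
  have hb := three_mul_integral_zhat_le hint hmart hS hg hm1 hmn hPm h24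
  have hq := mul_measureReal_le_integral_zhat_min_nuTime (g := g) hint hS hh.le hm1 hmn
  rw [← le_div_iff₀' hh] at hq
  have hsplit : μ.real {ω | min (nuTime n X g h ω) m < T ω} ≤
      μ.real {ω | min (nuTime n X g h ω) m < T ω ∧ min (nuTime n X g h ω) m < m} +
        μ.real {ω | m < T ω} := by
    refine (measureReal_mono fun ω hω => ?_).trans (measureReal_union_le _ _)
    rcases (min_le_right (nuTime n X g h ω) m).lt_or_eq with hlt | heq
    · exact Or.inl ⟨hω, hlt⟩
    · exact Or.inr (heq ▸ hω)
  calc μ.real {ω | min (nuTime n X g h ω) m < T ω}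
      ≤ (∫ ω, zhat n X g (min (nuTime n X g h ω) m) ω ∂μ) / h +
          3 * (∫ ω, zhat n X g m ω ∂μ) / B := by linarith
    _ ≤ 2 * (∫ ω, zhat n X g n ω ∂μ) / h + 4 * (∫ ω, zhat n X g n ω ∂μ) / B := by
        gcongr; linarith
    _ = (2 / h + 4 / B) * ∫ ω, zhat n X g n ω ∂μ := by ring

lemma integral_zhat_min_nuTime_sub_le (hint : ∀ i ∈ Finset.Icc 1 n, Integrable (X i) μ)
    (hmart : ∀ k ∈ Finset.Icc 1 n, ∀ A, MeasurableSet[ℱ (k - 1)] A → ∫ ω in A, X k ω ∂μ = 0)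
    (hS : Adapted ℱ (psum X)) (hg : ∀ k ∈ Finset.Icc 1 n, |g k| ≤ gs) (hm1 : 1 ≤ m) (hmn : m ≤ n)
    (hh : 0 < h) (h6 : 6 * gs ≤ h)
    (hPm : μ.real {ω | m < T ω} ≤ 3 * (∫ ω, zhat n X g m ω ∂μ) / B) (h24 : 24 * gs ≤ B) :
    ∫ ω, zhat n X g (min (nuTime n X g h ω) m) ω ∂μ - ∫ ω, zhat n X g n ω ∂μ ≤
      2 * (2 / h + 4 / B) * gs * ∫ ω, zhat n X g n ω ∂μ := by
  have hgs : 0 ≤ gs := (abs_nonneg _).trans (hg m (Finset.mem_Icc.mpr ⟨hm1, hmn⟩))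
  have hdiff := integral_zhat_sub_zhat_le (σ := fun ω => min (nuTime n X g h ω) m) hint hmart
    hS hg ((isStoppingTime_nuTime hS h).min_nat (isStoppingTime_const ℱ m))
    (one_le_min_nuTime hm1) (fun _ => (min_le_right _ _).trans hmn) le_rfl
  have hP : μ.real {ω | min (nuTime n X g h ω) m < T ω ∧ min (nuTime n X g h ω) m < n} ≤
      μ.real {ω | min (nuTime n X g h ω) m < T ω} := measureReal_mono fun ω hω => hω.1
  have := mul_le_mul_of_nonneg_left
    (hP.trans (measureReal_min_nuTime_lt_fpt_le hint hmart hS hg hm1 hmn hh h6 hPm h24))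
    (by positivity : (0 : ℝ) ≤ 2 * gs)
  linarith

lemma setIntegral_X_fpt_sub_le_integral_zhat_min_nuTime_sub
    (hint : ∀ i ∈ Finset.Icc 1 n, Integrable (X i) μ)
    (hmart : ∀ k ∈ Finset.Icc 1 n, ∀ A, MeasurableSet[ℱ (k - 1)] A → ∫ ω in A, X k ω ∂μ = 0)
    (hS : Adapted ℱ (psum X)) (hg : ∀ k ∈ Finset.Icc 1 n, |g k| ≤ gs) (hm1 : 1 ≤ m) (hmn : m ≤ n)
    (hh : 0 < h) (h6 : 6 * gs ≤ h)
    (hPm : μ.real {ω | m < T ω} ≤ 3 * (∫ ω, zhat n X g m ω ∂μ) / B) (h24 : 24 * gs ≤ B) :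
    ∫ ω in {ω | min (nuTime n X g h ω) m < T ω ∧ T ω ≤ n}, X (T ω) ω ∂μ -
        2 * (2 / h + 4 / B) * gs * ∫ ω, zhat n X g n ω ∂μ ≤
      ∫ ω, zhat n X g (min (nuTime n X g h ω) m) ω ∂μ - ∫ ω, zhat n X g n ω ∂μ := by
  have hgs : 0 ≤ gs := (abs_nonneg _).trans (hg m (Finset.mem_Icc.mpr ⟨hm1, hmn⟩))
  have hdiff := setIntegral_X_fpt_sub_le (σ := fun ω => min (nuTime n X g h ω) m) hint hmart
    hS hg ((isStoppingTime_nuTime hS h).min_nat (isStoppingTime_const ℱ m))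
    (one_le_min_nuTime hm1) (fun _ => (min_le_right _ _).trans hmn) le_rfl
  have := mul_le_mul_of_nonneg_left
    (measureReal_min_nuTime_lt_fpt_le hint hmart hS hg hm1 hmn hh h6 hPm h24)
    (by positivity : (0 : ℝ) ≤ 2 * gs)
  linarith

lemma neg_le_setIntegral_X_fpt_min_nuTime (hint : ∀ i ∈ Finset.Icc 1 n, Integrable (X i) μ)
    (hmart : ∀ k ∈ Finset.Icc 1 n, ∀ A, MeasurableSet[ℱ (k - 1)] A → ∫ ω in A, X k ω ∂μ = 0)
    (hS : Adapted ℱ (psum X)) (hg : ∀ k ∈ Finset.Icc 1 n, |g k| ≤ gs) (hm1 : 1 ≤ m) (hmn : m ≤ n)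
    (hh : 0 < h) (h6 : 6 * gs ≤ h)
    (hPm : μ.real {ω | m < T ω} ≤ 3 * (∫ ω, zhat n X g m ω ∂μ) / B) (h24 : 24 * gs ≤ B)
    {r : ℝ} (hr : 0 ≤ r) (hbdd : ∀ i ∈ Finset.Icc 1 n, ∀ᵐ ω ∂μ, |X i ω| ≤ r) :
    -((2 / h + 4 / B) * r * ∫ ω, zhat n X g n ω ∂μ) ≤
      ∫ ω in {ω | min (nuTime n X g h ω) m < T ω ∧ T ω ≤ n}, X (T ω) ω ∂μ := by
  have hA := abs_setIntegral_comp_le hbdd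
    (A := {ω | min (nuTime n X g h ω) m < T ω ∧ T ω ≤ n}) (ρ := T)
    fun ω hω => Finset.mem_Icc.mpr ⟨one_le_fpt ω, hω.2⟩
  have hP : μ.real {ω | min (nuTime n X g h ω) m < T ω ∧ T ω ≤ n} ≤
      μ.real {ω | min (nuTime n X g h ω) m < T ω} := measureReal_mono fun ω hω => hω.1
  have := mul_le_mul_of_nonneg_left
    (hP.trans (measureReal_min_nuTime_lt_fpt_le hint hmart hS hg hm1 hmn hh h6 hPm h24)) hr
  linarith [(abs_le.mp hA).1]

end Estimates

theorem stmt_16_general {Ω : Type*} [MeasureSpace Ω] [IsProbabilityMeasure (ℙ : Measure Ω)]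
    (n m : ℕ) (X : ℕ → Ω → ℝ) (g : ℕ → ℝ) (r h gs Bm En κ δ : ℝ)
    (hmeas : ∀ i, Measurable (X i))
    (hind : iIndepFun
      (fun i : {i // i ∈ Finset.Icc 1 n} => X i) ℙ)
    (hmean : ∀ i ∈ Finset.Icc 1 n, ∫ ω, X i ω = 0)
    (hr : 0 < r)
    (hbdd : ∀ i ∈ Finset.Icc 1 n, ∀ᵐ ω ∂ℙ, |X i ω| ≤ r)
    (hm1 : 1 ≤ m) (hmn : m ≤ n) (hh : 0 < h)
    (hgs : gs = ⨆ k ∈ Finset.Icc 1 n, |g k|)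
    (hEn : En = ∫ ω, zhat n X g n ω)
    (hκ : κ = 2 / h + 4 / Bm)
    (hδ : δ = ∫ ω in {ω | min (nuTime n X g h ω) m < fpt n (psum X) g ω ∧
        fpt n (psum X) g ω ≤ n}, X (fpt n (psum X) g ω) ω)
    (hPm : (ℙ {ω | m < fpt n (psum X) g ω}).toReal ≤ 3 * (∫ ω, zhat n X g m ω) / Bm)
    (h24 : 24 * gs ≤ Bm)
    (h6 : 6 * gs ≤ h) :
    (2 * ∫ ω, zhat n X g (min (nuTime n X g h ω) m) ω ≤ 3 * ∫ ω, zhat n X g m ω)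
    ∧ (3 * ∫ ω, zhat n X g m ω ≤ 4 * En)
    ∧ ((ℙ {ω | 0 < zhat n X g (min (nuTime n X g h ω) m) ω}).toReal ≤ κ * En)
    ∧ ((∫ ω, zhat n X g (min (nuTime n X g h ω) m) ω) - En ≤ 2 * κ * gs * En)
    ∧ (δ - 2 * κ * gs * En ≤ (∫ ω, zhat n X g (min (nuTime n X g h ω) m) ω) - En)
    ∧ (δ ≤ 0)
    ∧ (-(κ * r * En) ≤ δ) := by
  have hint : ∀ i ∈ Finset.Icc 1 n, Integrable (X i) ℙ := fun i hi =>
    .of_bound (hmeas i).aestronglyMeasurable r (by simpa only [Real.norm_eq_abs] using hbdd i hi)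
  have hg : ∀ k ∈ Finset.Icc 1 n, |g k| ≤ gs := fun k hk => hgs ▸ abs_le_biSup_abs g hk
  have hS := adapted_psumFiltration hmeas
  have hmart := fun k (hk : k ∈ Finset.Icc 1 n) A =>
    setIntegral_eq_zero_of_psumFiltration (A := A) hmeas hind hmean hint hk
  have hpos : {ω | 0 < zhat n X g (min (nuTime n X g h ω) m) ω} =
      {ω | min (nuTime n X g h ω) m < fpt n (psum X) g ω} :=
    Set.ext fun ω => zhat_pos_iff (one_le_min_nuTime hm1 ω) ω
  subst hEn hκ hδ
  exact ⟨two_mul_integral_zhat_min_nuTime_le hint hmart hS hg hm1 hmn hh.le h6,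
    three_mul_integral_zhat_le hint hmart hS hg hm1 hmn hPm h24,
    hpos ▸ measureReal_min_nuTime_lt_fpt_le hint hmart hS hg hm1 hmn hh h6 hPm h24,
    integral_zhat_min_nuTime_sub_le hint hmart hS hg hm1 hmn hh h6 hPm h24,
    setIntegral_X_fpt_sub_le_integral_zhat_min_nuTime_sub hint hmart hS hg hm1 hmn hh h6 hPm h24,
    setIntegral_X_fpt_nonpos hint hmart hS
      ((isStoppingTime_nuTime hS h).min_nat (isStoppingTime_const _ m)) le_rfl,
    neg_le_setIntegral_X_fpt_min_nuTime hint hmart hS hg hm1 hmn hh h6 hPm h24 hr.le hbdd⟩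

/-- Lemma 5: estimates for `E[Ẑ_{ν(h)∧m}]` and related quantities. -/
theorem stmt_16 {Ω : Type*} [MeasureSpace Ω] [IsProbabilityMeasure (ℙ : Measure Ω)]
    (n m : ℕ) (X : ℕ → Ω → ℝ) (g : ℕ → ℝ) (r h gs Bm En κ δ : ℝ)
    (hmeas : ∀ i, Measurable (X i))
    (hind : iIndepFun
      (fun i : {i // i ∈ Finset.Icc 1 n} => X i) ℙ)
    (hmean : ∀ i ∈ Finset.Icc 1 n, ∫ ω, X i ω = 0)
    (hvar : (∑ i ∈ Finset.Icc 1 n, ∫ ω, (X i ω) ^ 2) = 1)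
    (hr : 0 < r)
    (hbdd : ∀ i ∈ Finset.Icc 1 n, ∀ᵐ ω ∂ℙ, |X i ω| ≤ r)
    (hm1 : 1 ≤ m) (hmn : m ≤ n) (hh : 0 < h)
    (hgs : gs = ⨆ k ∈ Finset.Icc 1 n, |g k|)
    (hBm : Bm = Real.sqrt (∑ i ∈ Finset.Icc 1 m, ∫ ω, (X i ω) ^ 2))
    (hEn : En = ∫ ω, zhat n X g n ω)
    (hκ : κ = 2 / h + 4 / Bm)
    (hδ : δ = ∫ ω in {ω | min (nuTime n X g h ω) m < fpt n (psum X) g ω ∧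
        fpt n (psum X) g ω ≤ n}, X (fpt n (psum X) g ω) ω)
    (hPm : (ℙ {ω | m < fpt n (psum X) g ω}).toReal ≤ 3 * (∫ ω, zhat n X g m ω) / Bm)
    (h24 : 24 * gs ≤ Bm)
    (h6 : 6 * gs ≤ h) :
    (2 * ∫ ω, zhat n X g (min (nuTime n X g h ω) m) ω ≤ 3 * ∫ ω, zhat n X g m ω)
    ∧ (3 * ∫ ω, zhat n X g m ω ≤ 4 * En)
    ∧ ((ℙ {ω | 0 < zhat n X g (min (nuTime n X g h ω) m) ω}).toReal ≤ κ * En)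
    ∧ ((∫ ω, zhat n X g (min (nuTime n X g h ω) m) ω) - En ≤ 2 * κ * gs * En)
    ∧ (δ - 2 * κ * gs * En ≤ (∫ ω, zhat n X g (min (nuTime n X g h ω) m) ω) - En)
    ∧ (δ ≤ 0)
    ∧ (-(κ * r * En) ≤ δ) :=
  stmt_16_general n m X g r h gs Bm En κ δ hmeas hind hmean hr hbdd hm1 hmn hh hgs hEn hκ hδ hPm h24
    h6
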